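/- A rational map of degree d ≥ 2 has at most two exceptional points, i.e., at most two points z of the Riemann sphere whose full backward orbit ⋃_{n≥0} f^{-n}(z) is finite. -/

import Mathlib

open Polynomial Filter Set Topology OnePoint

noncomputable section

/-- The map of the Riemann sphere `OnePoint ℂ` induced by the rational function `P/Q`. -/
noncomputable def ratApply (P Q : Polynomial ℂ) : OnePoint ℂ → OnePoint ℂ := fun w =>
  match w with
  | ∞ =>
      if Q.degree < P.degree then ∞
      else if P.degree < Q.degree then ((0 : ℂ) : OnePoint ℂ)
      else ((P.leadingCoeff / Q.leadingCoeff : ℂ) : OnePoint ℂ)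
  | (z : ℂ) => if Q.eval z = 0 then ∞ else ((P.eval z / Q.eval z : ℂ) : OnePoint ℂ)

/-- `f` has local degree `n` at `a`: small neighborhoods of `a` cover nearby values `n` times. -/
def IsLocalDeg (f : OnePoint ℂ → OnePoint ℂ) (a : OnePoint ℂ) (n : ℕ) : Prop :=
  ∀ U ∈ 𝓝 a, ∃ V ∈ 𝓝 a, V ⊆ U ∧ ∀ᶠ w in 𝓝[≠] (f a), (V ∩ f ⁻¹' {w}).ncard = n

/-- A rational map of degree `d`, given by a pair of coprime polynomials. -/
structure RatMap (d : ℕ) where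
  P : Polynomial ℂ
  Q : Polynomial ℂ
  coprime : IsCoprime P Q
  deg : max P.natDegree Q.natDegree = d

/-- The induced self-map of the Riemann sphere. -/
noncomputable def RatMap.toFun {d : ℕ} (F : RatMap d) : OnePoint ℂ → OnePoint ℂ :=
  ratApply F.P F.Q

/-- The set of critical points: points of local degree at least `2`. -/
def critSet (f : OnePoint ℂ → OnePoint ℂ) : Set (OnePoint ℂ) :=
  {a | ∃ n, 2 ≤ n ∧ IsLocalDeg f a n}

end

/-!
If the backward orbit `B` of `z` is finite, then `f⁻¹ B ⊆ B` and surjectivity of `f` force `f` to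
be injective on `f⁻¹ B`, so the fiber over `z` is a single point. For `f = P/Q` this means that
the member `P - zQ` (`Q` if `z = ∞`) of the pencil spanned by `P` and `Q` is either `c (X - w)^d`
or a nonzero constant (fiber `{∞}`). Two constants in the pencil would make `P` and `Q` constant,
and any three members are linearly dependent; but for `d ≥ 2`, differentiating such a relation
and eliminating one term leaves two powers of distinct linear factors, which are independent.
-/

namespace Polynomial

theorem eq_C_leadingCoeff_mul_X_sub_C_pow_of_isRoot {K : Type*} [Field K] [IsAlgClosed K]
    {p : K[X]} {w : K} (h : ∀ x, p.IsRoot x → x = w) : p = C p.leadingCoeff * (X - C w) ^ p.natDegree := by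
  have hroots : p.roots = Multiset.replicate p.natDegree w := by
    rw [← IsAlgClosed.card_roots_eq_natDegree]
    exact Multiset.eq_replicate_card.2 fun x hx => h x (isRoot_of_mem_roots hx)
  have := C_leadingCoeff_mul_prod_multiset_X_sub_C (p := p) IsAlgClosed.card_roots_eq_natDegree
  rwa [hroots, Multiset.map_replicate, Multiset.prod_replicate, eq_comm] at this

theorem derivative_C_mul_X_sub_C_pow_succ {R : Type*} [CommRing R] (a u : R) (k : ℕ) :
    derivative (C a * (X - C u) ^ (k + 1)) = C ((k + 1 : ℕ) * a) * (X - C u) ^ k := by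
  rw [derivative_C_mul, derivative_X_sub_C_pow, Nat.add_sub_cancel, map_mul]
  ring

variable {R : Type*} [CommRing R] [IsDomain R]

theorem eq_zero_of_C_mul_pow_add_C_mul_pow_eq_zero {k : ℕ} (hk : k ≠ 0) {a b u v : R}
    (huv : u ≠ v) (h : C a * (X - C u) ^ k + C b * (X - C v) ^ k = 0) : a = 0 ∧ b = 0 := by
  have hu := congrArg (eval u) h
  have hv := congrArg (eval v) h
  simp [zero_pow hk, sub_eq_zero, huv, huv.symm] at hu hv
  exact ⟨hv, hu⟩

variable [CharZero R]

theorem eq_zero_of_C_mul_pow_add_C_mul_pow_add_C_eq_zero {d : ℕ} (hd : 2 ≤ d) {a b c u v : R}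
    (huv : u ≠ v) (h : C a * (X - C u) ^ d + C b * (X - C v) ^ d + C c = 0) :
    a = 0 ∧ b = 0 ∧ c = 0 := by
  obtain ⟨k, rfl⟩ : ∃ k, d = k + 2 := ⟨d - 2, by omega⟩
  have hD := congrArg derivative h
  rw [derivative_add, derivative_add, derivative_C_mul_X_sub_C_pow_succ,
    derivative_C_mul_X_sub_C_pow_succ, derivative_C, add_zero, derivative_zero] at hD
  obtain ⟨ha, hb⟩ := eq_zero_of_C_mul_pow_add_C_mul_pow_eq_zero k.succ_ne_zero huv hD
  have hk : ((k + 2 : ℕ) : R) ≠ 0 := Nat.cast_ne_zero.2 (k + 1).succ_ne_zero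
  obtain rfl : a = 0 := (mul_eq_zero.1 ha).resolve_left hk
  obtain rfl : b = 0 := (mul_eq_zero.1 hb).resolve_left hk
  simpa using h

theorem eq_zero_of_C_mul_pow_add_C_mul_pow_add_C_mul_pow_eq_zero {d : ℕ} (hd : 2 ≤ d)
    {a b c u v w : R} (huv : u ≠ v) (huw : u ≠ w) (hvw : v ≠ w)
    (h : C a * (X - C u) ^ d + C b * (X - C v) ^ d + C c * (X - C w) ^ d = 0) :
    a = 0 ∧ b = 0 ∧ c = 0 := by
  obtain ⟨k, rfl⟩ : ∃ k, d = k + 2 := ⟨d - 2, by omega⟩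
  have hD := congrArg derivative h
  rw [derivative_add, derivative_add, derivative_C_mul_X_sub_C_pow_succ,
    derivative_C_mul_X_sub_C_pow_succ, derivative_C_mul_X_sub_C_pow_succ, derivative_zero] at hD
  -- `(k + 2) p - (X - w) p'` annihilates `(X - w)^(k+2)`
  have hE : C ((k + 2) * a * (w - u)) * (X - C u) ^ (k + 1)
      + C ((k + 2) * b * (w - v)) * (X - C v) ^ (k + 1) = 0 := by
    simp only [map_mul, map_sub, map_add, map_natCast, map_ofNat, map_one, Nat.cast_add,
      Nat.cast_one] at h hD ⊢
    linear_combination ((k : R[X]) + 2) * h - (X - C w) * hD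
  obtain ⟨ha, hb⟩ := eq_zero_of_C_mul_pow_add_C_mul_pow_eq_zero k.succ_ne_zero huv hE
  have hk : (k : R) + 2 ≠ 0 := by exact_mod_cast (k + 1).succ_ne_zero
  obtain rfl : a = 0 := by simpa [hk, sub_eq_zero, huw.symm] using ha
  obtain rfl : b = 0 := by simpa [hk, sub_eq_zero, hvw.symm] using hb
  simpa [X_sub_C_ne_zero] using h

end Polynomial

theorem Function.Surjective.subsingleton_preimage_of_finite_backwardOrbit {α : Type*}
    {f : α → α} (hf : Function.Surjective f) {z : α} (h : {w | ∃ n, f^[n] w = z}.Finite) :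
    (f ⁻¹' {z}).Subsingleton := by
  set B := {w | ∃ n, f^[n] w = z}
  have hB : f ⁻¹' B ⊆ B := fun w ⟨n, hn⟩ => ⟨n + 1, by rwa [Function.iterate_succ_apply]⟩
  -- `f` maps the finite set `f⁻¹ B` onto the larger set `B`
  have hinj : InjOn f (f ⁻¹' B) := by
    refine injOn_of_ncard_image_eq (le_antisymm (ncard_image_le (h.subset hB)) ?_) (h.subset hB)
    rw [image_preimage_eq B hf]
    exact ncard_le_ncard hB h
  have hz : z ∈ B := ⟨0, rfl⟩
  intro u hu v hv
  exact hinj (show f u ∈ B from hu ▸ hz) (show f v ∈ B from hv ▸ hz) (hu.trans hv.symm)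

namespace RatMap

/-- `(coordP z, coordQ z)` are homogeneous coordinates of `z`, normalized so that `fiberPoly z`
is `coordP z • P + coordQ z • Q`. -/
def coordP : OnePoint ℂ → ℂ
  | ∞ => 0
  | (_ : ℂ) => 1

def coordQ : OnePoint ℂ → ℂ
  | ∞ => 1
  | (a : ℂ) => -a

def coordDet (z z' : OnePoint ℂ) : ℂ := coordP z * coordQ z' - coordP z' * coordQ z

theorem coordDet_ne_zero {z z' : OnePoint ℂ} (h : z ≠ z') : coordDet z z' ≠ 0 := by
  induction z using OnePoint.rec <;> induction z' using OnePoint.rec <;>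
    simp_all [coordDet, coordP, coordQ, neg_add_eq_zero, eq_comm]

variable {d : ℕ} (F : RatMap d)

/-- Its roots are the finite points of the fiber over `z`. -/
noncomputable def fiberPoly : OnePoint ℂ → ℂ[X]
  | ∞ => F.Q
  | (a : ℂ) => F.P - C a * F.Q

/-- The fiber over `z` is a single point of multiplicity `d`: a finite point `w`, or `∞` when
`fiberPoly z` is constant. -/
def IsTotallyRamifiedOver (z : OnePoint ℂ) : Prop :=
  (F.fiberPoly z).natDegree = 0 ∨ ∃ c w, c ≠ 0 ∧ F.fiberPoly z = C c * (X - C w) ^ d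

theorem fiberPoly_eq (z : OnePoint ℂ) :
    F.fiberPoly z = C (coordP z) * F.P + C (coordQ z) * F.Q := by
  induction z using OnePoint.rec <;> simp [fiberPoly, coordP, coordQ, sub_eq_add_neg]

theorem fiberPoly_relation (z₁ z₂ z₃ : OnePoint ℂ) :
    C (coordDet z₂ z₃) * F.fiberPoly z₁ + C (coordDet z₃ z₁) * F.fiberPoly z₂
      + C (coordDet z₁ z₂) * F.fiberPoly z₃ = 0 := by
  simp only [fiberPoly_eq, coordDet, map_sub, map_mul]
  ring

theorem natDegree_fiberPoly_le (z : OnePoint ℂ) : (F.fiberPoly z).natDegree ≤ d := by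
  have := F.deg
  induction z using OnePoint.rec with
  | infty => exact (le_max_right _ _).trans this.le
  | coe a =>
    have := natDegree_sub_le F.P (C a * F.Q)
    have := natDegree_C_mul_le a F.Q
    simp only [fiberPoly]
    omega

theorem fiberPoly_ne_zero (hd : 0 < d) (z : OnePoint ℂ) : F.fiberPoly z ≠ 0 := by
  have hdeg := F.deg
  induction z using OnePoint.rec with
  | infty =>
    rintro (hQ : F.Q = 0)
    have := natDegree_eq_zero_of_isUnit (isCoprime_zero_right.1 (hQ ▸ F.coprime))
    simp only [hQ, natDegree_zero] at hdeg
    omega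
  | coe a =>
    intro h
    have hPQ : F.P = C a * F.Q := sub_eq_zero.1 h
    have hQ := natDegree_eq_zero_of_isUnit
      (F.coprime.isUnit_of_dvd' (hPQ ▸ dvd_mul_left _ _) dvd_rfl)
    have := natDegree_C_mul_le a F.Q
    rw [hPQ] at hdeg
    omega

theorem eval_P_ne_zero_of_eval_Q_eq_zero {x : ℂ} (hx : F.Q.eval x = 0) : F.P.eval x ≠ 0 := by
  intro hP
  have := F.coprime.map (evalRingHom x)
  simp [hP, hx] at this

theorem coeff_P_ne_zero_or_coeff_Q_ne_zero : F.P.coeff d ≠ 0 ∨ F.Q.coeff d ≠ 0 := by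
  by_contra! h
  have hdeg := F.deg
  rcases Nat.eq_zero_or_pos d with rfl | hd
  · have hP : F.P = 0 := by rw [eq_C_of_natDegree_eq_zero (p := F.P) (by omega), h.1, C_0]
    have hQ : F.Q = 0 := by rw [eq_C_of_natDegree_eq_zero (p := F.Q) (by omega), h.2, C_0]
    exact not_isCoprime_zero_zero (hP ▸ hQ ▸ F.coprime)
  · rcases max_choice F.P.natDegree F.Q.natDegree with hR | hR <;> rw [hdeg] at hR
    · have hP : F.P.leadingCoeff = 0 := by rw [leadingCoeff, ← hR, h.1]
      exact ne_zero_of_natDegree_gt (n := 0) (by omega) (leadingCoeff_eq_zero.1 hP)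
    · have hQ : F.Q.leadingCoeff = 0 := by rw [leadingCoeff, ← hR, h.2]
      exact ne_zero_of_natDegree_gt (n := 0) (by omega) (leadingCoeff_eq_zero.1 hQ)

theorem toFun_coe (x : ℂ) :
    F.toFun x = if F.Q.eval x = 0 then ∞ else ↑(F.P.eval x / F.Q.eval x) :=
  rfl

theorem toFun_infty :
    F.toFun ∞ = if F.Q.coeff d = 0 then ∞ else ↑(F.P.coeff d / F.Q.coeff d) := by
  have hdeg := F.deg
  have hP : F.P.degree ≤ d := degree_le_of_natDegree_le (by omega)
  have hQ : F.Q.degree ≤ d := degree_le_of_natDegree_le (by omega)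
  show (if F.Q.degree < F.P.degree then ∞ else if F.P.degree < F.Q.degree then ((0 : ℂ) : _)
    else ((F.P.leadingCoeff / F.Q.leadingCoeff : ℂ) : OnePoint ℂ)) = _
  by_cases hQd : F.Q.coeff d = 0
  · have hPd := F.coeff_P_ne_zero_or_coeff_Q_ne_zero.resolve_right (not_not.2 hQd)
    have hQlt : F.Q.degree < d := lt_of_le_of_ne hQ fun h => coeff_ne_zero_of_eq_degree h hQd
    rw [if_pos hQd, if_pos (hQlt.trans_eq (degree_eq_of_le_of_coeff_ne_zero hP hPd).symm)]
  · have hQeq := degree_eq_of_le_of_coeff_ne_zero hQ hQd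
    rw [if_neg hQd, if_neg (by rw [hQeq]; exact not_lt.2 hP)]
    by_cases hPd : F.P.coeff d = 0
    · have hPlt : F.P.degree < d := lt_of_le_of_ne hP fun h => coeff_ne_zero_of_eq_degree h hPd
      rw [if_pos (hQeq ▸ hPlt), hPd, zero_div]
    · have hPeq := degree_eq_of_le_of_coeff_ne_zero hP hPd
      rw [if_neg (by rw [hPeq, hQeq]; exact lt_irrefl _), leadingCoeff, leadingCoeff,
        natDegree_eq_of_degree_eq_some hPeq, natDegree_eq_of_degree_eq_some hQeq]

theorem toFun_eq_of_isRoot {x : ℂ} {z : OnePoint ℂ} (h : (F.fiberPoly z).IsRoot x) :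
    F.toFun x = z := by
  rw [toFun_coe]
  induction z using OnePoint.rec with
  | infty => exact if_pos h
  | coe a =>
    have h' : F.P.eval x - a * F.Q.eval x = 0 := by simpa [fiberPoly] using h
    have hQ : F.Q.eval x ≠ 0 := fun hQ =>
      F.eval_P_ne_zero_of_eval_Q_eq_zero hQ (by simpa [hQ] using h')
    rw [if_neg hQ, coe_eq_coe, div_eq_iff hQ]
    linear_combination h'

theorem toFun_infty_of_natDegree_fiberPoly_lt {z : OnePoint ℂ}
    (h : (F.fiberPoly z).natDegree < d) : F.toFun ∞ = z := by
  have hc := coeff_eq_zero_of_natDegree_lt h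
  rw [toFun_infty]
  induction z using OnePoint.rec with
  | infty => exact if_pos hc
  | coe a =>
    have hc' : F.P.coeff d - a * F.Q.coeff d = 0 := by simpa [fiberPoly] using hc
    have hQ : F.Q.coeff d ≠ 0 := fun hQ =>
      F.coeff_P_ne_zero_or_coeff_Q_ne_zero.elim (· (by simpa [hQ] using hc')) (· hQ)
    rw [if_neg hQ, coe_eq_coe, div_eq_iff hQ]
    linear_combination hc'

theorem toFun_surjective (hd : 0 < d) : Function.Surjective F.toFun := by
  intro z
  by_cases h : (F.fiberPoly z).natDegree = 0
  · exact ⟨∞, F.toFun_infty_of_natDegree_fiberPoly_lt (h ▸ hd)⟩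
  · obtain ⟨x, hx⟩ := Complex.exists_root (natDegree_pos_iff_degree_pos.1 (Nat.pos_of_ne_zero h))
    exact ⟨x, F.toFun_eq_of_isRoot hx⟩

theorem isTotallyRamifiedOver_of_subsingleton_preimage (hd : 0 < d) {z : OnePoint ℂ}
    (h : (F.toFun ⁻¹' {z}).Subsingleton) : F.IsTotallyRamifiedOver z := by
  refine or_iff_not_imp_left.2 fun h0 => ?_
  obtain ⟨w, hw⟩ := Complex.exists_root (natDegree_pos_iff_degree_pos.1 (Nat.pos_of_ne_zero h0))
  have hwz : F.toFun w = z := F.toFun_eq_of_isRoot hw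
  have hroots (x : ℂ) (hx : (F.fiberPoly z).IsRoot x) : x = w :=
    coe_injective (h (F.toFun_eq_of_isRoot hx) hwz)
  have hdeg : (F.fiberPoly z).natDegree = d :=
    (F.natDegree_fiberPoly_le z).eq_or_lt.resolve_right fun hlt =>
      coe_ne_infty w (h hwz (F.toFun_infty_of_natDegree_fiberPoly_lt hlt))
  refine ⟨_, w, leadingCoeff_ne_zero.2 (F.fiberPoly_ne_zero hd z), ?_⟩
  exact (eq_C_leadingCoeff_mul_X_sub_C_pow_of_isRoot hroots).trans (by rw [hdeg])

theorem eq_zero_of_natDegree_fiberPoly_eq_zero {z z' : OnePoint ℂ} (hzz : z ≠ z')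
    (h : (F.fiberPoly z).natDegree = 0) (h' : (F.fiberPoly z').natDegree = 0) : d = 0 := by
  have hδ := coordDet_ne_zero hzz
  have hcomb (R : ℂ[X]) (a b : ℂ)
      (hR : C (coordDet z z') * R = C a * F.fiberPoly z - C b * F.fiberPoly z') :
      R.natDegree = 0 := by
    have hle := natDegree_sub_le (C a * F.fiberPoly z) (C b * F.fiberPoly z')
    rw [← hR, natDegree_C_mul hδ] at hle
    have := natDegree_C_mul_le a (F.fiberPoly z)
    have := natDegree_C_mul_le b (F.fiberPoly z')
    omega
  -- Cramer's rule for the pencil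
  have hP := hcomb F.P (coordQ z') (coordQ z) (by
    simp only [fiberPoly_eq, coordDet, map_sub, map_mul]; ring)
  have hQ := hcomb F.Q (-coordP z') (-coordP z) (by
    simp only [fiberPoly_eq, coordDet, map_sub, map_mul, map_neg]; ring)
  have := F.deg
  omega

theorem false_of_isTotallyRamifiedOver_of_eq_pow (hd : 2 ≤ d) {z₁ z₂ z₃ : OnePoint ℂ}
    (h₁₂ : z₁ ≠ z₂) (h₁₃ : z₁ ≠ z₃) (h₂₃ : z₂ ≠ z₃) {c₁ c₂ w₁ w₂ : ℂ} (hc₁ : c₁ ≠ 0)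
    (h₁ : F.fiberPoly z₁ = C c₁ * (X - C w₁) ^ d) (h₂ : F.fiberPoly z₂ = C c₂ * (X - C w₂) ^ d)
    (h₃ : F.IsTotallyRamifiedOver z₃) : False := by
  have hw {z : OnePoint ℂ} {c w : ℂ} (h : F.fiberPoly z = C c * (X - C w) ^ d) :
      F.toFun w = z :=
    F.toFun_eq_of_isRoot (by simp [h, IsRoot, zero_pow (show d ≠ 0 by omega)])
  have hw₁₂ : w₁ ≠ w₂ := fun h => h₁₂ (by rw [← hw h₁, ← hw h₂, h])
  have hα : coordDet z₂ z₃ * c₁ ≠ 0 := mul_ne_zero (coordDet_ne_zero h₂₃) hc₁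
  have hrel := F.fiberPoly_relation z₁ z₂ z₃
  rw [h₁, h₂] at hrel
  rcases h₃ with h₃ | ⟨c₃, w₃, -, h₃⟩
  · rw [eq_C_of_natDegree_eq_zero h₃, ← mul_assoc, ← mul_assoc, ← map_mul, ← map_mul,
      ← map_mul] at hrel
    exact hα (eq_zero_of_C_mul_pow_add_C_mul_pow_add_C_eq_zero hd hw₁₂ hrel).1
  · have hw₁₃ : w₁ ≠ w₃ := fun h => h₁₃ (by rw [← hw h₁, ← hw h₃, h])
    have hw₂₃ : w₂ ≠ w₃ := fun h => h₂₃ (by rw [← hw h₂, ← hw h₃, h])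
    simp only [h₃, ← mul_assoc, ← map_mul] at hrel
    exact hα (eq_zero_of_C_mul_pow_add_C_mul_pow_add_C_mul_pow_eq_zero hd hw₁₂ hw₁₃ hw₂₃ hrel).1

theorem encard_setOf_isTotallyRamifiedOver_le_two (hd : 2 ≤ d) :
    {z | F.IsTotallyRamifiedOver z}.encard ≤ 2 := by
  by_contra! h
  obtain ⟨t, hts, ht⟩ := exists_subset_encard_eq (Order.add_one_le_of_lt h)
  obtain ⟨z₁, z₂, z₃, h₁₂, h₁₃, h₂₃, rfl⟩ := encard_eq_three.1 ht
  have hconst {z z' : OnePoint ℂ} (hzz : z ≠ z') (h : (F.fiberPoly z).natDegree = 0)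
      (h' : (F.fiberPoly z').natDegree = 0) : False := by
    have := F.eq_zero_of_natDegree_fiberPoly_eq_zero hzz h h'
    omega
  have h₃ : F.IsTotallyRamifiedOver z₃ := hts (by simp)
  rcases hts (by simp : z₁ ∈ _) with h₁ | ⟨c₁, w₁, hc₁, h₁⟩ <;>
    rcases hts (by simp : z₂ ∈ _) with h₂ | ⟨c₂, w₂, hc₂, h₂⟩
  · exact hconst h₁₂ h₁ h₂
  · rcases h₃ with h₃ | ⟨c₃, w₃, -, h₃'⟩
    · exact hconst h₁₃ h₁ h₃
    · exact F.false_of_isTotallyRamifiedOver_of_eq_pow hd h₂₃ h₁₂.symm h₁₃.symm hc₂ h₂ h₃'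
        (Or.inl h₁)
  · rcases h₃ with h₃ | ⟨c₃, w₃, -, h₃'⟩
    · exact hconst h₂₃ h₂ h₃
    · exact F.false_of_isTotallyRamifiedOver_of_eq_pow hd h₁₃ h₁₂ h₂₃.symm hc₁ h₁ h₃'
        (Or.inl h₂)
  · exact F.false_of_isTotallyRamifiedOver_of_eq_pow hd h₁₂ h₁₃ h₂₃ hc₁ h₁ h₂ h₃

end RatMap

/-- A rational map of degree `d ≥ 2` has at most two exceptional points, i.e. points whose
full backward orbit `⋃ₙ f⁻ⁿ(z)` is finite. -/
theorem exceptional_points_le_two {d : ℕ} (hd : 2 ≤ d) (F : RatMap d) :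
    {z : OnePoint ℂ | {w : OnePoint ℂ | ∃ n, F.toFun^[n] w = z}.Finite}.encard ≤ 2 := by
  refine (encard_le_encard fun z hz => ?_).trans (F.encard_setOf_isTotallyRamifiedOver_le_two hd)
  exact F.isTotallyRamifiedOver_of_subsingleton_preimage (by omega)
    ((F.toFun_surjective (by omega)).subsingleton_preimage_of_finite_backwardOrbit hz)
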